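/- arXiv:1103.0542 — 3 statements merged into one kernel-verified Lean document; each statement's English description precedes it below -/
import Mathlib

section
/- There exists a constant M₅ > 0 such that ‖C∇Ψ(x) − C∇Ψ(y)‖_s ≤ M₅ ‖x − y‖_s for all x, y ∈ H^s; moreover, the functions C^N∇Ψ^N : H^s → H^s satisfy the same global Lipschitz bound with a constant that can be chosen independently of N. -/
open MeasureTheory ProbabilityTheory Real Filter
open scoped ENNReal NNReal Topology

noncomputable section

/-- The model space for every Sobolev-like space `H^r`: the Hilbert space `ℓ²(ℕ; ℝ)`.
An element `u : Hsp`, viewed as a point of `H^r`, represents the sequence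
`(x_j)_{j ≥ 1}` with `x_{j+1} = (j+1)^{-r} * u j` (so that `‖u‖ = ‖x‖_r`,
and the indices are shifted by one: `j : ℕ` stands for the coordinate `j+1 ≥ 1`). -/
abbrev Hsp : Type := lp (fun _ : ℕ => ℝ) 2

/-- the weight `(j+1)^r`. -/
def wt (r : ℝ) (j : ℕ) : ℝ := ((j : ℝ) + 1) ^ r

/-- the coordinates of `u : Hsp` viewed as an element of `H^r`. -/
def seqr (r : ℝ) (u : Hsp) (j : ℕ) : ℝ := wt (-r) j * u j

/-- the `H^r` norm of a raw sequence. -/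
def rnorm (r : ℝ) (a : ℕ → ℝ) : ℝ := (∑' j, wt (2 * r) j * a j ^ 2) ^ ((1 : ℝ) / 2)

theorem memℓp_of_eventually_zero (f : ℕ → ℝ) (N : ℕ) (hf : ∀ j, N ≤ j → f j = 0) :
    Memℓp f 2 := by
  apply memℓp_gen
  apply summable_of_ne_finset_zero (s := Finset.range N)
  intro j hj
  rw [Finset.mem_range, not_lt] at hj
  rw [hf j hj]
  simp [Real.zero_rpow]

/-- embedding of `X^N ≅ ℝ^N` into `Hsp`, viewing `x : Fin N → ℝ` as the element of `H^s`
whose `(i+1)`-th coordinate is `x i` for `i < N` and `0` beyond. -/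
def ofX (s : ℝ) (N : ℕ) (x : Fin N → ℝ) : Hsp :=
  ⟨fun j => if h : j < N then wt s j * x ⟨j, h⟩ else 0,
   memℓp_of_eventually_zero _ N (fun j hj => dif_neg (Nat.not_lt.mpr hj))⟩

/-- the projection `P^N` (truncation of all coordinates beyond the `N`-th). -/
def PNproj (N : ℕ) (u : Hsp) : Hsp :=
  ⟨fun j => if j < N then u j else 0, by
    apply memℓp_gen
    refine Summable.of_nonneg_of_le (fun j => ?_) (fun j => ?_)
      ((lp.memℓp u).summable (by norm_num))
    · positivity
    · by_cases h : j < N <;> simp [h] <;> positivity⟩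

/-! Through the ℓ² model of `H^s`, the hypothesis on `gradΨ` says that `gradΨ x` is the Riesz
representative of `DΨ(x)`, so the Hessian bound and the mean value inequality make `gradΨ`
`M₄`-Lipschitz. Applying `C` and passing from the `H^{-s}` to the `H^s` weight multiplies the
`j`-th coordinate by `j^{2s} λ_j² ≤ c₊² j^{2s-2κ} ≤ c₊²`, and `P^N` is a contraction, which
gives a Lipschitz constant independent of `N`. -/

lemma wt_mul (a b : ℝ) (j : ℕ) : wt a j * wt b j = wt (a + b) j :=
  (Real.rpow_add (by positivity) a b).symm

lemma wt_pos (r : ℝ) (j : ℕ) : 0 < wt r j := by unfold wt; positivity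

lemma wt_le_one {r : ℝ} (hr : r ≤ 0) (j : ℕ) : wt r j ≤ 1 :=
  Real.rpow_le_one_of_one_le_of_nonpos (by simp) hr

lemma seqr_neg_mul_seqr (r : ℝ) (u v : Hsp) (j : ℕ) : seqr (-r) u j * seqr r v j = u j * v j := by
  have : wt r j * wt (-r) j = 1 := by rw [wt_mul, add_neg_cancel]; exact Real.rpow_zero _
  simp only [seqr, neg_neg]
  linear_combination u j * v j * this

lemma seqr_sub (r : ℝ) (u v : Hsp) (j : ℕ) : seqr r (u - v) j = seqr r u j - seqr r v j := by
  simp only [seqr, lp.coeFn_sub, Pi.sub_apply]; ring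

lemma norm_sq_eq_tsum (u : Hsp) : ‖u‖ ^ 2 = ∑' j, u j ^ 2 := by
  rw [← real_inner_self_eq_norm_sq, lp.inner_eq_tsum]
  simp [sq]

lemma summable_sq (u : Hsp) : Summable fun j => u j ^ 2 := by
  simpa [sq] using lp.summable_inner (𝕜 := ℝ) u u

lemma norm_PNproj_sub_le (N : ℕ) (x y : Hsp) : ‖PNproj N x - PNproj N y‖ ≤ ‖x - y‖ :=
  lp.norm_mono two_ne_zero fun j => by
    simp only [lp.coeFn_sub, Pi.sub_apply]
    by_cases h : j < N <;> simp [PNproj, h]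

lemma rnorm_mul_seqr_le {s C : ℝ} {m : ℕ → ℝ} (hm : ∀ j, |wt (2 * s) j * m j| ≤ C) (u : Hsp) :
    rnorm s (fun j => m j * seqr (-s) u j) ≤ C * ‖u‖ := by
  have hC : 0 ≤ C := (abs_nonneg _).trans (hm 0)
  have hterm : ∀ j, wt (2 * s) j * (m j * seqr (-s) u j) ^ 2 ≤ C ^ 2 * u j ^ 2 := fun j => by
    have hw : wt (2 * s) j * (m j * seqr (-s) u j) ^ 2 = (wt (2 * s) j * m j) ^ 2 * u j ^ 2 := by
      rw [seqr, neg_neg, two_mul, ← wt_mul]; ring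
    rw [hw]
    have hmj : (wt (2 * s) j * m j) ^ 2 ≤ C ^ 2 := by
      simpa only [sq_abs] using pow_le_pow_left₀ (abs_nonneg _) (hm j) 2
    exact mul_le_mul_of_nonneg_right hmj (sq_nonneg _)
  have hsum : ∑' j, wt (2 * s) j * (m j * seqr (-s) u j) ^ 2 ≤ (C * ‖u‖) ^ 2 := by
    rw [mul_pow, norm_sq_eq_tsum, ← tsum_mul_left]
    have hbound := (summable_sq u).mul_left (C ^ 2)
    have hnonneg : ∀ j, 0 ≤ wt (2 * s) j * (m j * seqr (-s) u j) ^ 2 := fun j => by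
      have := wt_pos (2 * s) j; positivity
    exact (hbound.of_nonneg_of_le hnonneg hterm).tsum_le_tsum hterm hbound
  rw [rnorm, ← Real.sqrt_eq_rpow]
  exact (Real.sqrt_le_sqrt hsum).trans_eq (Real.sqrt_sq (by positivity))

lemma rnorm_mul_seqr_sub_le {s C : ℝ} {m : ℕ → ℝ} (hm : ∀ j, |wt (2 * s) j * m j| ≤ C)
    (u v : Hsp) :
    rnorm s (fun j => m j * seqr (-s) u j - m j * seqr (-s) v j) ≤ C * ‖u - v‖ := by
  simpa only [seqr_sub, mul_sub] using rnorm_mul_seqr_le hm (u - v)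

lemma norm_sub_le_of_fderiv_eq_innerSL {E : Type*} [NormedAddCommGroup E] [InnerProductSpace ℝ E]
    {f : E → ℝ} {g : E → E} {M : ℝ} (hg : ∀ x, fderiv ℝ f x = innerSL ℝ (g x))
    (hf : Differentiable ℝ (fderiv ℝ f)) (hM : ∀ x, ‖fderiv ℝ (fderiv ℝ f) x‖ ≤ M) (x y : E) :
    ‖g x - g y‖ ≤ M * ‖x - y‖ := by
  rw [← innerSL_apply_norm ℝ, map_sub, ← hg, ← hg]
  exact convex_univ.norm_image_sub_le_of_norm_fderiv_le (fun z _ => hf z) (fun z _ => hM z)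
    (Set.mem_univ y) (Set.mem_univ x)

lemma fderiv_eq_innerSL_of_eq_tsum_seqr {s : ℝ} {Ψ : Hsp → ℝ} {gradΨ : Hsp → Hsp}
    (hgrad : ∀ x h : Hsp, fderiv ℝ Ψ x h = ∑' j, seqr (-s) (gradΨ x) j * seqr s h j) (x : Hsp) :
    fderiv ℝ Ψ x = innerSL ℝ (gradΨ x) := by
  ext h
  simp only [hgrad, seqr_neg_mul_seqr, innerSL_apply_apply, lp.inner_eq_tsum, Real.inner_apply]

lemma abs_wt_mul_sq_le {κ c s l : ℝ} {j : ℕ} (hs : s ≤ κ) (hl0 : 0 < l)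
    (hl : l ≤ c * wt (-κ) j) : |wt (2 * s) j * l ^ 2| ≤ c ^ 2 := by
  have hw := wt_pos (2 * s) j
  rw [abs_of_nonneg (by positivity)]
  calc wt (2 * s) j * l ^ 2 ≤ wt (2 * s) j * (c * wt (-κ) j) ^ 2 := by gcongr
    _ = c ^ 2 * wt (2 * s + -κ + -κ) j := by rw [← wt_mul, ← wt_mul]; ring
    _ ≤ c ^ 2 * 1 := by gcongr; exact wt_le_one (by linarith) j
    _ = c ^ 2 := mul_one _

theorem statement_1_general (lam : ℕ → ℝ) (κ cminus cplus s : ℝ) (Ψ : Hsp → ℝ) (gradΨ : Hsp → Hsp)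
    (M₄ : ℝ)
    (hlampos : ∀ j : ℕ, 0 < lam j)
    (hlam : ∀ j : ℕ, cminus * wt (-κ) j ≤ lam j ∧ lam j ≤ cplus * wt (-κ) j)
    (hsκ : s < κ - 1/2)
    (hΨdiff2 : Differentiable ℝ (fderiv ℝ Ψ))
    (hgradrep : ∀ x h : Hsp, fderiv ℝ Ψ x h = ∑' j, seqr (-s) (gradΨ x) j * seqr s h j)
    (hhessb : ∀ x : Hsp, ‖fderiv ℝ (fderiv ℝ Ψ) x‖ ≤ M₄):
    ∃ M₅ : ℝ, 0 < M₅ ∧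
      (∀ x y : Hsp,
        rnorm s (fun j => lam j ^ 2 * seqr (-s) (gradΨ x) j
            - lam j ^ 2 * seqr (-s) (gradΨ y) j) ≤ M₅ * ‖x - y‖) ∧
      (∀ (N : ℕ) (x y : Hsp),
        rnorm s (fun j =>
            (if j < N then lam j ^ 2 * seqr (-s) (gradΨ (PNproj N x)) j else 0)
            - (if j < N then lam j ^ 2 * seqr (-s) (gradΨ (PNproj N y)) j else 0))
          ≤ M₅ * ‖x - y‖) := by
  have hM₄ : 0 ≤ M₄ := (norm_nonneg (fderiv ℝ (fderiv ℝ Ψ) 0)).trans (hhessb 0)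
  have hgrad_lip : ∀ x y, ‖gradΨ x - gradΨ y‖ ≤ M₄ * ‖x - y‖ :=
    norm_sub_le_of_fderiv_eq_innerSL (fderiv_eq_innerSL_of_eq_tsum_seqr hgradrep) hΨdiff2 hhessb
  have hmul : ∀ j, |wt (2 * s) j * lam j ^ 2| ≤ cplus ^ 2 := fun j =>
    abs_wt_mul_sq_le (by linarith) (hlampos j) (hlam j).2
  have hmulN : ∀ N j, |wt (2 * s) j * (if j < N then lam j ^ 2 else 0)| ≤ cplus ^ 2 := by
    intro N j
    split_ifs
    · exact hmul j
    · simpa using sq_nonneg cplus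
  have hM₅ : ∀ x y : Hsp, cplus ^ 2 * ‖gradΨ x - gradΨ y‖ ≤ (cplus ^ 2 * M₄ + 1) * ‖x - y‖ :=
    fun x y => by nlinarith [hgrad_lip x y, norm_nonneg (x - y), sq_nonneg cplus]
  refine ⟨cplus ^ 2 * M₄ + 1, by positivity, fun x y => ?_, fun N x y => ?_⟩
  · exact (rnorm_mul_seqr_sub_le hmul _ _).trans (hM₅ x y)
  · simp only [← ite_zero_mul]
    calc _ ≤ (cplus ^ 2 * M₄ + 1) * ‖PNproj N x - PNproj N y‖ :=
          (rnorm_mul_seqr_sub_le (hmulN N) _ _).trans (hM₅ _ _)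
      _ ≤ (cplus ^ 2 * M₄ + 1) * ‖x - y‖ := by gcongr; exact norm_PNproj_sub_le N x y

theorem statement_1 (lam : ℕ → ℝ) (κ cminus cplus s : ℝ) (Ψ : Hsp → ℝ) (gradΨ : Hsp → Hsp)
    (M₁ M₂ M₃ M₄ : ℝ)
    (hκ : 1/2 < κ) (hcminus : 0 < cminus) (hcpm : cminus ≤ cplus)
    (hlampos : ∀ j : ℕ, 0 < lam j)
    (hlam : ∀ j : ℕ, cminus * wt (-κ) j ≤ lam j ∧ lam j ≤ cplus * wt (-κ) j)
    (hs0 : 0 ≤ s) (hsκ : s < κ - 1/2)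
    (hΨdiff : Differentiable ℝ Ψ) (hΨdiff2 : Differentiable ℝ (fderiv ℝ Ψ))
    (hgradrep : ∀ x h : Hsp, fderiv ℝ Ψ x h = ∑' j, seqr (-s) (gradΨ x) j * seqr s h j)
    (hΨlb : ∀ x : Hsp, M₁ ≤ Ψ x) (hΨub : ∀ x : Hsp, Ψ x ≤ M₂ * (1 + ‖x‖ ^ 2))
    (hgradb : ∀ x : Hsp, ‖gradΨ x‖ ≤ M₃ * (1 + ‖x‖))
    (hhessb : ∀ x : Hsp, ‖fderiv ℝ (fderiv ℝ Ψ) x‖ ≤ M₄):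
    ∃ M₅ : ℝ, 0 < M₅ ∧
      (∀ x y : Hsp,
        rnorm s (fun j => lam j ^ 2 * seqr (-s) (gradΨ x) j
            - lam j ^ 2 * seqr (-s) (gradΨ y) j) ≤ M₅ * ‖x - y‖) ∧
      (∀ (N : ℕ) (x y : Hsp),
        rnorm s (fun j =>
            (if j < N then lam j ^ 2 * seqr (-s) (gradΨ (PNproj N x)) j else 0)
            - (if j < N then lam j ^ 2 * seqr (-s) (gradΨ (PNproj N y)) j else 0))
          ≤ M₅ * ‖x - y‖) :=
  statement_1_general lam κ cminus cplus s Ψ gradΨ M₄ hlampos hlam hsκ hΨdiff2 hgradrep hhessb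

end
end

section
/- The measures π^N, regarded as probability measures on H^s supported on X^N, converge weakly to π: for every bounded continuous g : H^s → ℝ, ∫ g dπ^N → ∫ g dπ as N → ∞. -/
open MeasureTheory ProbabilityTheory Real Filter
open scoped ENNReal NNReal Topology

noncomputable section

/-- the MALA time step `Δt = N^{-1/3}`. -/
def Δt (N : ℕ) : ℝ := (N : ℝ) ^ (-(1/3) : ℝ)

/-- `‖u‖²_{C^N} = ∑_{j=1}^N λ_j^{-2} u_j²` on `X^N ≅ ℝ^N`. -/
def cnormsq (lam : ℕ → ℝ) (N : ℕ) (u : Fin N → ℝ) : ℝ :=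
  ∑ i : Fin N, (lam i ^ 2)⁻¹ * u i ^ 2

/-- the `H^s` norm of a point of `X^N ≅ ℝ^N`. -/
def xnorm (s : ℝ) (N : ℕ) (u : Fin N → ℝ) : ℝ :=
  (∑ i : Fin N, wt (2 * s) i * u i ^ 2) ^ ((1 : ℝ) / 2)

/-- `Ψ^N = Ψ ∘ P^N`, as a function on `X^N ≅ ℝ^N`. -/
def PsiN (s : ℝ) (Ψ : Hsp → ℝ) (N : ℕ) (x : Fin N → ℝ) : ℝ := Ψ (ofX s N x)

/-- `μ^N(x) = -(P^N x + C^N ∇Ψ^N(x))` on `X^N ≅ ℝ^N`. -/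
def muN (lam : ℕ → ℝ) (s : ℝ) (gradΨ : Hsp → Hsp) (N : ℕ) (x : Fin N → ℝ) : Fin N → ℝ :=
  fun i => -(x i + lam i ^ 2 * seqr (-s) (gradΨ (ofX s N x)) i)

/-- the MALA proposal `y = x + δ μ^N(x) + √(2δ) (C^N)^{1/2} ξ^N`, with `δ = ℓ Δt`. -/
def propY (lam : ℕ → ℝ) (s : ℝ) (gradΨ : Hsp → Hsp) (ℓ : ℝ) (N : ℕ)
    (x ξ : Fin N → ℝ) : Fin N → ℝ :=
  fun i => x i + (ℓ * Δt N) * muN lam s gradΨ N x i +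
    Real.sqrt (2 * (ℓ * Δt N)) * (lam i * ξ i)

/-- the MALA log acceptance ratio `Q^N(x, ξ^N)`. -/
def QN (lam : ℕ → ℝ) (s : ℝ) (Ψ : Hsp → ℝ) (gradΨ : Hsp → Hsp) (ℓ : ℝ) (N : ℕ)
    (x ξ : Fin N → ℝ) : ℝ :=
  -(1/2) * (cnormsq lam N (propY lam s gradΨ ℓ N x ξ) - cnormsq lam N x)
  - (PsiN s Ψ N (propY lam s gradΨ ℓ N x ξ) - PsiN s Ψ N x)
  - (1 / (4 * (ℓ * Δt N))) *
      (cnormsq lam N (fun i => x i - propY lam s gradΨ ℓ N x ξ i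
          - (ℓ * Δt N) * muN lam s gradΨ N (propY lam s gradΨ ℓ N x ξ) i)
       - cnormsq lam N (fun i => propY lam s gradΨ ℓ N x ξ i - x i
          - (ℓ * Δt N) * muN lam s gradΨ N x i))

/-- the law of `ξ^N`: `N` i.i.d. standard Gaussians. -/
def gaussN (N : ℕ) : Measure (Fin N → ℝ) := Measure.pi fun _ => gaussianReal 0 1

/-- the target `π^N`: the probability measure on `X^N ≅ ℝ^N` whose density with respect to
Lebesgue measure is proportional to `exp(-½‖x‖²_{C^N} - Ψ^N(x))`. -/
def piN (lam : ℕ → ℝ) (s : ℝ) (Ψ : Hsp → ℝ) (N : ℕ) : Measure (Fin N → ℝ) :=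
  ((volume.withDensity fun x => ENNReal.ofReal
      (Real.exp (-(1/2) * cnormsq lam N x - PsiN s Ψ N x))) Set.univ)⁻¹ •
  (volume.withDensity fun x => ENNReal.ofReal
      (Real.exp (-(1/2) * cnormsq lam N x - PsiN s Ψ N x)))

/-- `Z^N(x, ξ^N)`, the Gaussian part of `Q^N`. -/
def ZN (lam : ℕ → ℝ) (ℓ : ℝ) (N : ℕ) (x ξ : Fin N → ℝ) : ℝ :=
  -(ℓ ^ 3) / 4 - (ℓ ^ ((3 : ℝ) / 2) / Real.sqrt 2) * (N : ℝ) ^ (-(1/2) : ℝ) *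
      ∑ i : Fin N, (lam i)⁻¹ * ξ i * x i

/-- `i^N(x, ξ^N) = ½ (ℓΔt)² (‖x‖²_{C^N} - ‖(C^N)^{1/2} ξ^N‖²_{C^N})`. -/
def iN (lam : ℕ → ℝ) (ℓ : ℝ) (N : ℕ) (x ξ : Fin N → ℝ) : ℝ :=
  (1/2) * (ℓ * Δt N) ^ 2 *
    (cnormsq lam N x - cnormsq lam N fun i => lam i * ξ i)

/-- the law of `Z_ℓ ∼ N(-ℓ³/4, ℓ³/2)`. -/
def lawZl (ℓ : ℝ) : Measure ℝ := gaussianReal (-(ℓ ^ 3) / 4) (Real.toNNReal (ℓ ^ 3 / 2))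

/-- the limiting mean acceptance probability `α(ℓ) = E[1 ∧ exp(Z_ℓ)]`. -/
def alphaEll (ℓ : ℝ) : ℝ := ∫ z, min 1 (Real.exp z) ∂(lawZl ℓ)

/-- the speed function `h(ℓ) = ℓ α(ℓ)`. -/
def hEll (ℓ : ℝ) : ℝ := ℓ * alphaEll ℓ

/-- the Gaussian reference measure `π₀^N` on `X^N ≅ ℝ^N`: the law of
`∑_{j=1}^N λ_j ξ_j φ_j` in coordinates, i.e. the product of `N(0, λ_j²)`. -/
def pi0N (lam : ℕ → ℝ) (N : ℕ) : Measure (Fin N → ℝ) :=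
  Measure.pi fun i => gaussianReal 0 (Real.toNNReal (lam i ^ 2))

/-- the normalizing constant `M_{Ψ^N} = (∫ exp(-Ψ^N) dπ₀^N)⁻¹`. -/
def MPsiN (lam : ℕ → ℝ) (s : ℝ) (Ψ : Hsp → ℝ) (N : ℕ) : ℝ :=
  (∫ x, Real.exp (-(PsiN s Ψ N x)) ∂(pi0N lam N))⁻¹

/-- the target `π^N`, defined through `dπ^N/dπ₀^N = M_{Ψ^N} exp(-Ψ^N)`. -/
def piNref (lam : ℕ → ℝ) (s : ℝ) (Ψ : Hsp → ℝ) (N : ℕ) : Measure (Fin N → ℝ) :=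
  (pi0N lam N).withDensity fun x =>
    ENNReal.ofReal (MPsiN lam s Ψ N * Real.exp (-(PsiN s Ψ N x)))

instance : MeasurableSpace Hsp := borel Hsp
instance : BorelSpace Hsp := ⟨rfl⟩

/-- the normalizing constant `M_Ψ = (∫ exp(-Ψ) dπ₀)⁻¹`. -/
def MPsi (Ψ : Hsp → ℝ) (pi0 : Measure Hsp) : ℝ := (∫ u, Real.exp (-(Ψ u)) ∂pi0)⁻¹

/-- the target measure `π` on `H^s`, defined through `dπ/dπ₀ = M_Ψ exp(-Ψ)`. -/
def piInf (Ψ : Hsp → ℝ) (pi0 : Measure Hsp) : Measure Hsp :=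
  pi0.withDensity fun u => ENNReal.ofReal (MPsi Ψ pi0 * Real.exp (-(Ψ u)))

/-! The coordinate map `u ↦ (seqr s u i)_{i<N}` pushes `π₀` forward to `π₀^N` and turns
`ofX s N` into `P^N`; since tilting commutes with push-forward, `π^N` viewed on `H^s` is `π₀`
tilted by `-Ψ ∘ P^N`. As `P^N u → u` for every `u` and `exp (-Ψ) ≤ exp (-M₁)`, dominated
convergence gives the convergence of the normalizing constants and of the tilted integrals of any
bounded continuous `g`. -/

section Tilted

variable {α β E : Type*} [MeasurableSpace α] [MeasurableSpace β]
  [NormedAddCommGroup E] [NormedSpace ℝ E]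

lemma withDensity_ofReal_inv_integral_mul_exp (μ : Measure α) (f : α → ℝ) :
    μ.withDensity (fun x => ENNReal.ofReal ((∫ y, exp (f y) ∂μ)⁻¹ * exp (f x))) = μ.tilted f := by
  simp only [Measure.tilted, inv_mul_eq_div]

lemma integral_tilted_map {μ : Measure α} {φ : α → β} (hφ : AEMeasurable φ μ) {f : β → ℝ}
    (hf : AEMeasurable f (μ.map φ)) {g : β → E} (hg : AEStronglyMeasurable g (μ.map φ)) :
    ∫ y, g y ∂((μ.map φ).tilted f) = ∫ x, g (φ x) ∂(μ.tilted fun x => f (φ x)) := by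
  rw [integral_tilted, integral_tilted, integral_map hφ hf.exp.aestronglyMeasurable]
  exact integral_map hφ ((hf.exp.div_const _).aestronglyMeasurable.smul hg)

end Tilted

section Approximation

variable {X : Type*} [TopologicalSpace X] [MeasurableSpace X] [OpensMeasurableSpace X]
  {μ : Measure X} {P : ℕ → X → X}

lemma tendsto_integral_comp_of_tendsto [IsFiniteMeasure μ] (hPm : ∀ N, Measurable (P N))
    (hP : ∀ u, Tendsto (fun N => P N u) atTop (𝓝 u)) {h : X → ℝ} (hh : Continuous h) {C : ℝ}
    (hC : ∀ u, |h u| ≤ C) :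
    Tendsto (fun N => ∫ u, h (P N u) ∂μ) atTop (𝓝 (∫ u, h u ∂μ)) :=
  tendsto_integral_of_dominated_convergence (fun _ => C)
    (fun N => (hh.measurable.comp (hPm N)).aestronglyMeasurable) (integrable_const C)
    (fun N => Eventually.of_forall fun u => hC (P N u))
    (Eventually.of_forall fun u => (hh.tendsto u).comp (hP u))

lemma tendsto_integral_tilted_comp_of_tendsto [IsFiniteMeasure μ] [NeZero μ]
    (hPm : ∀ N, Measurable (P N)) (hP : ∀ u, Tendsto (fun N => P N u) atTop (𝓝 u))
    {f : X → ℝ} (hf : Continuous f) {M : ℝ} (hfM : ∀ u, f u ≤ M)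
    {g : X → ℝ} (hg : Continuous g) {B : ℝ} (hgB : ∀ u, |g u| ≤ B) :
    Tendsto (fun N => ∫ u, g (P N u) ∂(μ.tilted fun u => f (P N u))) atTop
      (𝓝 (∫ u, g u ∂(μ.tilted f))) := by
  have hexp : ∀ u, |exp (f u)| ≤ exp M := fun u => by
    rw [abs_of_pos (exp_pos _)]
    exact exp_le_exp.mpr (hfM u)
  have hexp_mul : ∀ u, |exp (f u) * g u| ≤ exp M * B := fun u => by
    rw [abs_mul]
    exact mul_le_mul (hexp u) (hgB u) (abs_nonneg _) (exp_pos M).le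
  have hZ : 0 < ∫ u, exp (f u) ∂μ :=
    integral_exp_pos ((integrable_const (exp M)).mono' hf.rexp.aestronglyMeasurable
      (Eventually.of_forall hexp))
  simp only [integral_tilted, smul_eq_mul, div_mul_eq_mul_div, integral_div]
  exact (tendsto_integral_comp_of_tendsto hPm hP (hf.rexp.mul hg) hexp_mul).div
    (tendsto_integral_comp_of_tendsto hPm hP hf.rexp hexp) hZ.ne'

end Approximation

section Coordinates

lemma continuous_lp_apply (j : ℕ) : Continuous fun u : Hsp => u j :=
  (lp.evalCLM ℝ (fun _ : ℕ => ℝ) 2 j).continuous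

lemma ofX_apply (s : ℝ) (N : ℕ) (x : Fin N → ℝ) (j : ℕ) :
    ofX s N x j = if h : j < N then wt s j * x ⟨j, h⟩ else 0 := rfl

lemma PNproj_apply (N : ℕ) (u : Hsp) (j : ℕ) : PNproj N u j = if j < N then u j else 0 := rfl

lemma continuous_ofX (s : ℝ) (N : ℕ) : Continuous (ofX s N) := by
  have hlin : IsLinearMap ℝ (ofX s N) :=
    ⟨fun x y => lp.ext <| funext fun j => by
      simp only [ofX_apply, lp.coeFn_add, Pi.add_apply]; split_ifs <;> ring,
     fun c x => lp.ext <| funext fun j => by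
      simp only [ofX_apply, lp.coeFn_smul, Pi.smul_apply, smul_eq_mul]; split_ifs <;> ring⟩
  exact (hlin.mk' _).continuous_of_finiteDimensional

lemma PNproj_eq_sum_single (N : ℕ) (u : Hsp) :
    PNproj N u = ∑ i ∈ Finset.range N, lp.single 2 i (u i) := by
  ext j
  rw [PNproj_apply, lp.coeFn_sum, Finset.sum_apply]
  simp [lp.single_apply, Finset.sum_pi_single]

lemma continuous_PNproj (N : ℕ) : Continuous (PNproj N) := by
  simp only [funext (PNproj_eq_sum_single N)]
  exact continuous_finsetSum _ fun i _ => (lp.isometry_single i).continuous.comp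
    (continuous_lp_apply i)

lemma tendsto_PNproj (u : Hsp) : Tendsto (fun N => PNproj N u) atTop (𝓝 u) := by
  simpa only [PNproj_eq_sum_single] using (lp.hasSum_single ENNReal.ofNat_ne_top u).tendsto_sum_nat

lemma ofX_seqr (s : ℝ) (N : ℕ) (u : Hsp) : ofX s N (fun i => seqr s u i) = PNproj N u := by
  ext j
  rw [ofX_apply, PNproj_apply]
  split_ifs
  · rw [seqr, wt, wt, ← mul_assoc, ← rpow_add (by positivity), add_neg_cancel, rpow_zero, one_mul]
  · rfl

lemma continuous_seqr (s : ℝ) (N : ℕ) : Continuous fun (u : Hsp) (i : Fin N) => seqr s u i :=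
  continuous_pi fun i => continuous_const.mul (continuous_lp_apply i)

end Coordinates

lemma integral_piNref_eq_integral_tilted_PNproj {lam : ℕ → ℝ} {s : ℝ} {Ψ : Hsp → ℝ}
    (hΨ : Continuous Ψ) {pi0 : Measure Hsp} {N : ℕ}
    (hpi0 : pi0.map (fun u => fun i : Fin N => seqr s u i) = pi0N lam N)
    {g : Hsp → ℝ} (hg : Continuous g) :
    ∫ x, g (ofX s N x) ∂(piNref lam s Ψ N) =
      ∫ u, g (PNproj N u) ∂(pi0.tilted fun u => -Ψ (PNproj N u)) := by
  have hψN : Continuous fun x => -PsiN s Ψ N x := (hΨ.comp (continuous_ofX s N)).neg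
  rw [piNref, MPsiN, withDensity_ofReal_inv_integral_mul_exp, ← hpi0]
  refine (integral_tilted_map (g := fun x => g (ofX s N x)) (continuous_seqr s N).aemeasurable
    hψN.aemeasurable (hg.comp (continuous_ofX s N)).aestronglyMeasurable).trans ?_
  simp only [PsiN, ofX_seqr]

theorem statement_8_general (lam : ℕ → ℝ) (s : ℝ) (Ψ : Hsp → ℝ)
    (M₁ : ℝ)
    (hΨdiff : Differentiable ℝ Ψ)
    (hΨlb : ∀ x : Hsp, M₁ ≤ Ψ x)
    (pi0 : Measure Hsp) (hprob : IsProbabilityMeasure pi0)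
    (hpi0 : ∀ N : ℕ, pi0.map (fun u => fun i : Fin N => seqr s u i)
        = Measure.pi fun i : Fin N => gaussianReal 0 (Real.toNNReal (lam i ^ 2))):
    ∀ g : Hsp → ℝ, Continuous g → (∃ B : ℝ, ∀ u : Hsp, |g u| ≤ B) →
      Tendsto (fun N : ℕ => ∫ x, g (ofX s N x) ∂(piNref lam s Ψ N)) atTop
        (𝓝 (∫ u, g u ∂(piInf Ψ pi0))) := by
  rintro g hg ⟨B, hgB⟩
  have hΨ : Continuous Ψ := hΨdiff.continuous
  simp only [integral_piNref_eq_integral_tilted_PNproj hΨ (hpi0 _) hg]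
  rw [piInf, MPsi, withDensity_ofReal_inv_integral_mul_exp]
  exact tendsto_integral_tilted_comp_of_tendsto (fun N => (continuous_PNproj N).measurable)
    tendsto_PNproj hΨ.neg (fun u => neg_le_neg (hΨlb u)) hg hgB

theorem statement_8 (lam : ℕ → ℝ) (κ cminus cplus s : ℝ) (Ψ : Hsp → ℝ) (gradΨ : Hsp → Hsp)
    (M₁ M₂ M₃ M₄ : ℝ)
    (hκ : 1/2 < κ) (hcminus : 0 < cminus) (hcpm : cminus ≤ cplus)
    (hlampos : ∀ j : ℕ, 0 < lam j)
    (hlam : ∀ j : ℕ, cminus * wt (-κ) j ≤ lam j ∧ lam j ≤ cplus * wt (-κ) j)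
    (hs0 : 0 ≤ s) (hsκ : s < κ - 1/2)
    (hΨdiff : Differentiable ℝ Ψ) (hΨdiff2 : Differentiable ℝ (fderiv ℝ Ψ))
    (hgradrep : ∀ x h : Hsp, fderiv ℝ Ψ x h = ∑' j, seqr (-s) (gradΨ x) j * seqr s h j)
    (hΨlb : ∀ x : Hsp, M₁ ≤ Ψ x) (hΨub : ∀ x : Hsp, Ψ x ≤ M₂ * (1 + ‖x‖ ^ 2))
    (hgradb : ∀ x : Hsp, ‖gradΨ x‖ ≤ M₃ * (1 + ‖x‖))
    (hhessb : ∀ x : Hsp, ‖fderiv ℝ (fderiv ℝ Ψ) x‖ ≤ M₄)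
    (pi0 : Measure Hsp) (hprob : IsProbabilityMeasure pi0)
    (hpi0 : ∀ N : ℕ, pi0.map (fun u => fun i : Fin N => seqr s u i)
        = Measure.pi fun i : Fin N => gaussianReal 0 (Real.toNNReal (lam i ^ 2))):
    ∀ g : Hsp → ℝ, Continuous g → (∃ B : ℝ, ∀ u : Hsp, |g u| ≤ B) →
      Tendsto (fun N : ℕ => ∫ x, g (ofX s N x) ∂(piNref lam s Ψ N)) atTop
        (𝓝 (∫ u, g u ∂(piInf Ψ pi0))) :=
  statement_8_general lam s Ψ M₁ hΨdiff hΨlb pi0 hprob hpi0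

end
end

section
/- For every p ≥ 1, sup_{N ≥ 1} ∫ ‖x‖_s^p dπ^N(x) < ∞. -/
open MeasureTheory ProbabilityTheory Real Filter
open scoped ENNReal NNReal Topology

noncomputable section

/-!
Under the Gaussian reference measure `priorN lam N = ⊗ᵢ N(0, λᵢ²)`, the target `π^N` is the
exponential tilt of `priorN` by `-Ψ^N`, and `‖x‖_s² = ∑ᵢ (i+1)^{2s} λᵢ² (xᵢ/λᵢ)²` with standard
normal `xᵢ/λᵢ`. Hölder's inequality for the weights `(i+1)^{2s} λᵢ²`, whose sum is bounded
uniformly in `N` because `2s - 2κ < -1`, bounds each moment of `‖x‖_s²` under `priorN` uniformly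
in `N`. Tilting by `-Ψ^N` costs at most `exp (-M₁)` in the numerator, while the normalising
constant is at least `exp (-|M₂| (1 + T)) / 2`: by Markov's inequality half of the mass of
`priorN` lies where `‖x‖_s² ≤ T`, and there `Ψ^N ≤ |M₂| (1 + T)`.
-/

theorem MeasureTheory.Measure.pi_withDensity_ofReal {ι : Type*} [Fintype ι] {α : ι → Type*}
    [∀ i, MeasurableSpace (α i)] {μ : ∀ i, Measure (α i)} [∀ i, SigmaFinite (μ i)]
    {g : ∀ i, α i → ℝ} (hg : ∀ i, Integrable (g i) (μ i)) (hg0 : ∀ i x, 0 ≤ g i x) :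
    Measure.pi (fun i => (μ i).withDensity fun t => ENNReal.ofReal (g i t)) =
      (Measure.pi μ).withDensity fun x => ENNReal.ofReal (∏ i, g i (x i)) := by
  have := fun i => isFiniteMeasure_withDensity_ofReal (hg i).2
  refine Measure.pi_eq fun s hs => ?_
  have hint : Integrable (fun x => ∏ i, g i (x i)) (Measure.pi fun i => (μ i).restrict (s i)) :=
    Integrable.fintype_prod_dep fun i => (hg i).restrict
  rw [withDensity_apply _ (MeasurableSet.univ_pi hs), Measure.restrict_pi_pi,
    ← ofReal_integral_eq_lintegral_ofReal hint
      (ae_of_all _ fun x => Finset.prod_nonneg fun i _ => hg0 i _),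
    integral_fintype_prod_eq_prod,
    ENNReal.ofReal_prod_of_nonneg fun i _ => integral_nonneg (hg0 i)]
  refine Finset.prod_congr rfl fun i _ => ?_
  rw [withDensity_apply _ (hs i),
    ofReal_integral_eq_lintegral_ofReal (hg i).restrict (ae_of_all _ (hg0 i))]

theorem MeasureTheory.Measure.tilted_eq_smul_withDensity {α : Type*} [MeasurableSpace α]
    (μ : Measure α) {φ : α → ℝ} (hφ : Integrable (fun x => exp (φ x)) μ) :
    μ.tilted φ = ((μ.withDensity fun x => ENNReal.ofReal (exp (φ x))) Set.univ)⁻¹ •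
      μ.withDensity fun x => ENNReal.ofReal (exp (φ x)) := by
  rcases eq_zero_or_neZero μ with rfl | _
  · simp
  have hZ : 0 < ∫ x, exp (φ x) ∂μ := integral_exp_pos hφ
  rw [withDensity_apply _ MeasurableSet.univ, Measure.restrict_univ,
    ← ofReal_integral_eq_lintegral_ofReal hφ (ae_of_all _ fun x => (exp_pos _).le),
    ← withDensity_smul' _ _ (by simpa using hZ)]
  unfold Measure.tilted
  congr with x
  rw [Pi.smul_apply, smul_eq_mul, ENNReal.ofReal_div_of_pos hZ, ENNReal.div_eq_inv_mul]

theorem MeasureTheory.Measure.inv_measure_univ_smul_smul {α : Type*} [MeasurableSpace α]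
    (ν : Measure α) {c : ℝ≥0∞} (hc0 : c ≠ 0) (hc : c ≠ ∞) :
    ((c • ν) Set.univ)⁻¹ • (c • ν) = (ν Set.univ)⁻¹ • ν := by
  rw [Measure.smul_apply, smul_smul, smul_eq_mul, ENNReal.mul_inv (Or.inl hc0) (Or.inl hc),
    mul_comm c⁻¹, mul_assoc, ENNReal.inv_mul_cancel hc0 hc, mul_one]

section Tilted

variable {α : Type*} [MeasurableSpace α] {μ : Measure α} [IsFiniteMeasure μ] {Φ : α → ℝ}
  {M₁ : ℝ}

lemma integrable_exp_neg_of_le (hΦ : Measurable Φ) (hΦlb : ∀ x, M₁ ≤ Φ x) :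
    Integrable (fun x => exp (-Φ x)) μ :=
  Integrable.of_bound (by fun_prop) (exp (-M₁)) (ae_of_all _ fun x => by
    simpa [abs_of_pos (exp_pos _)] using hΦlb x)

lemma integral_tilted_neg_le (hΦ : Measurable Φ) (hΦlb : ∀ x, M₁ ≤ Φ x) {A : Set α} {K : ℝ}
    (hA : MeasurableSet A) (hμA : 0 < μ.real A) (hΦA : ∀ x ∈ A, Φ x ≤ K)
    {f : α → ℝ} (hf : Integrable f μ) (hf0 : ∀ x, 0 ≤ f x) :
    ∫ x, f x ∂μ.tilted (fun x => -Φ x) ≤ exp (K - M₁) / μ.real A * ∫ x, f x ∂μ := by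
  have hexp := integrable_exp_neg_of_le (μ := μ) hΦ hΦlb
  have hnum : ∫ x, exp (-Φ x) * f x ∂μ ≤ exp (-M₁) * ∫ x, f x ∂μ := by
    rw [← integral_const_mul]
    refine integral_mono (hf.bdd_mul (by fun_prop) (c := exp (-M₁)) (ae_of_all _ fun x => ?_))
      (hf.const_mul _) fun x => mul_le_mul_of_nonneg_right ?_ (hf0 x)
    · simpa [abs_of_pos (exp_pos _)] using hΦlb x
    · simpa using hΦlb x
  have hden : exp (-K) * μ.real A ≤ ∫ x, exp (-Φ x) ∂μ :=
    calc exp (-K) * μ.real A ≤ ∫ x in A, exp (-Φ x) ∂μ :=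
          setIntegral_ge_of_const_le_real hA (measure_ne_top _ _)
            (fun x hx => by simpa using hΦA x hx) hexp.integrableOn
      _ ≤ ∫ x, exp (-Φ x) ∂μ :=
          setIntegral_le_integral hexp (ae_of_all _ fun x => (exp_pos _).le)
  rw [integral_tilted]
  simp only [smul_eq_mul, div_mul_eq_mul_div, integral_div]
  calc (∫ x, exp (-Φ x) * f x ∂μ) / ∫ x, exp (-Φ x) ∂μ
      ≤ exp (-M₁) * (∫ x, f x ∂μ) / (exp (-K) * μ.real A) :=
        div_le_div₀ (mul_nonneg (exp_pos _).le (integral_nonneg hf0)) hnum (by positivity) hden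
    _ = exp (K - M₁) * (∫ x, f x ∂μ) / μ.real A := by
        rw [sub_eq_add_neg, exp_add, exp_neg K]
        field_simp

end Tilted

lemma half_le_measureReal_le_of_two_mul_integral_le {α : Type*} [MeasurableSpace α]
    {μ : Measure α} [IsProbabilityMeasure μ] {u : α → ℝ} (hum : Measurable u)
    (hu0 : ∀ x, 0 ≤ u x) (hu : Integrable u μ) {T : ℝ} (hT : 0 < T) (huT : 2 * ∫ x, u x ∂μ ≤ T) :
    1 / 2 ≤ μ.real {x | u x ≤ T} := by
  have hmarkov := mul_meas_ge_le_integral_of_nonneg (ae_of_all _ hu0) hu T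
  have hcompl : μ.real {x | T ≤ u x}ᶜ = 1 - μ.real {x | T ≤ u x} :=
    probReal_compl_eq_one_sub (measurableSet_le measurable_const hum)
  have hsub : μ.real {x | T ≤ u x}ᶜ ≤ μ.real {x | u x ≤ T} :=
    measureReal_mono fun x (hx : ¬T ≤ u x) => (not_le.1 hx).le
  nlinarith

lemma integrable_pow_two_mul_gaussianReal (μ : ℝ) (v : ℝ≥0) (m : ℕ) :
    Integrable (fun t => t ^ (2 * m)) (gaussianReal μ v) := by
  simpa [(even_two_mul m).pow_abs] using (memLp_id_gaussianReal' (μ := μ) (v := v)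
    ((2 * m : ℕ) : ℝ≥0∞) (ENNReal.natCast_ne_top _)).integrable_norm_pow'

lemma pow_sum_mul_le {ι : Type*} (s : Finset ι) {a y : ι → ℝ} (ha : ∀ i, 0 ≤ a i)
    (hy : ∀ i, 0 ≤ y i) {m : ℕ} (hm : m ≠ 0) :
    (∑ i ∈ s, a i * y i) ^ m ≤ (∑ i ∈ s, a i) ^ (m - 1) * ∑ i ∈ s, a i * y i ^ m := by
  have hm' : (m : ℝ) ≠ 0 := Nat.cast_ne_zero.2 hm
  have hA : 0 ≤ ∑ i ∈ s, a i := Finset.sum_nonneg fun i _ => ha i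
  have hB : 0 ≤ ∑ i ∈ s, a i * y i ^ m :=
    Finset.sum_nonneg fun i _ => mul_nonneg (ha i) (pow_nonneg (hy i) m)
  have holder := inner_le_weight_mul_Lp_of_nonneg s (p := m)
    (by exact_mod_cast Nat.one_le_iff_ne_zero.2 hm) a y ha hy
  simp only [rpow_natCast] at holder
  calc (∑ i ∈ s, a i * y i) ^ m
      ≤ ((∑ i ∈ s, a i) ^ (1 - (m : ℝ)⁻¹) * (∑ i ∈ s, a i * y i ^ m) ^ (m : ℝ)⁻¹) ^ m :=
        pow_le_pow_left₀ (Finset.sum_nonneg fun i _ => mul_nonneg (ha i) (hy i)) holder m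
    _ = (∑ i ∈ s, a i) ^ (m - 1) * ∑ i ∈ s, a i * y i ^ m := by
        rw [mul_pow, ← rpow_mul_natCast hA, ← rpow_mul_natCast hB, inv_mul_cancel₀ hm', rpow_one,
          sub_mul, one_mul, inv_mul_cancel₀ hm', ← Nat.cast_one,
          ← Nat.cast_sub (Nat.one_le_iff_ne_zero.2 hm), rpow_natCast]

lemma rpow_le_one_add_pow {u q : ℝ} (hu : 0 ≤ u) (hq : 0 ≤ q) {m : ℕ} (hqm : q ≤ m) :
    u ^ q ≤ 1 + u ^ m := by
  rcases le_or_gt u 1 with h | h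
  · linarith [rpow_le_one hu h hq, pow_nonneg hu m]
  · linarith [rpow_natCast u m ▸ rpow_le_rpow_of_exponent_le h.le hqm]

lemma wt_nonneg (r : ℝ) (j : ℕ) : 0 ≤ wt r j :=
  rpow_nonneg (by positivity) r

lemma summable_wt {r : ℝ} (hr : r < -1) : Summable (wt r) := by
  refine ((summable_nat_add_iff 1).2 (summable_nat_rpow.2 hr)).congr fun j => ?_
  simp [wt]

lemma wt_sq (r : ℝ) (j : ℕ) : wt r j ^ 2 = wt (2 * r) j := by
  rw [wt, wt, ← rpow_natCast, ← rpow_mul (by positivity)]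
  ring_nf

def ofXₗ (s : ℝ) (N : ℕ) : (Fin N → ℝ) →ₗ[ℝ] Hsp where
  toFun := ofX s N
  map_add' x y := by
    ext j
    simp only [ofX_apply, lp.coeFn_add, Pi.add_apply]
    split_ifs <;> ring
  map_smul' c x := by
    ext j
    simp only [ofX_apply, lp.coeFn_smul, Pi.smul_apply, smul_eq_mul, RingHom.id_apply]
    split_ifs <;> ring

def xnormSq (s : ℝ) (N : ℕ) (x : Fin N → ℝ) : ℝ := ∑ i : Fin N, wt (2 * s) i * x i ^ 2

lemma xnormSq_nonneg (s : ℝ) (N : ℕ) (x : Fin N → ℝ) : 0 ≤ xnormSq s N x :=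
  Finset.sum_nonneg fun _ _ => mul_nonneg (wt_nonneg _ _) (sq_nonneg _)

lemma continuous_xnormSq (s : ℝ) (N : ℕ) : Continuous (xnormSq s N) := by
  unfold xnormSq; fun_prop

lemma norm_ofX_sq (s : ℝ) (N : ℕ) (x : Fin N → ℝ) : ‖ofX s N x‖ ^ 2 = xnormSq s N x := by
  have h := lp.norm_rpow_eq_tsum (p := 2) (by norm_num) (ofX s N x)
  simp only [ENNReal.toReal_ofNat, rpow_two, norm_eq_abs, sq_abs] at h
  rw [h, tsum_eq_sum (s := Finset.range N) fun j hj => by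
    simp [ofX_apply, dif_neg (Finset.mem_range.not.1 hj)], ← Fin.sum_univ_eq_sum_range]
  refine Finset.sum_congr rfl fun i _ => ?_
  rw [ofX_apply, dif_pos i.isLt, mul_pow, wt_sq]

lemma xnorm_rpow (s : ℝ) (N : ℕ) (x : Fin N → ℝ) (p : ℝ) :
    xnorm s N x ^ p = xnormSq s N x ^ (p / 2) := by
  rw [xnorm, ← xnormSq, ← rpow_mul (xnormSq_nonneg s N x)]
  ring_nf

def priorN (lam : ℕ → ℝ) (N : ℕ) : Measure (Fin N → ℝ) :=
  Measure.pi fun i => gaussianReal 0 (lam i ^ 2).toNNReal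

instance isProbabilityMeasure_priorN (lam : ℕ → ℝ) (N : ℕ) :
    IsProbabilityMeasure (priorN lam N) := by
  unfold priorN; infer_instance

theorem withDensity_exp_neg_half_cnormsq {lam : ℕ → ℝ} (hlam : ∀ j, lam j ≠ 0) (N : ℕ) :
    volume.withDensity (fun x => ENNReal.ofReal (exp (-(1/2) * cnormsq lam N x))) =
      ENNReal.ofReal (∏ i : Fin N, √(2 * π * lam i ^ 2)) • priorN lam N := by
  have hv : ∀ i : Fin N, (lam i ^ 2).toNNReal ≠ 0 := fun i => by
    simpa using hlam i
  have hpi : priorN lam N = volume.withDensity fun x =>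
      ENNReal.ofReal (∏ i : Fin N, gaussianPDFReal 0 (lam i ^ 2).toNNReal (x i)) := by
    simp only [priorN, gaussianReal_of_var_ne_zero _ (hv _)]
    exact Measure.pi_withDensity_ofReal (fun i => integrable_gaussianPDFReal _ _)
      (fun i => gaussianPDFReal_nonneg _ _)
  rw [hpi, ← withDensity_smul' _ _ ENNReal.ofReal_ne_top]
  congr with x
  rw [Pi.smul_apply, smul_eq_mul, ← ENNReal.ofReal_mul (by positivity),
    ← Finset.prod_mul_distrib]
  congr 1
  simp only [gaussianPDFReal_def, Real.coe_toNNReal _ (sq_nonneg _), sub_zero, ← mul_assoc]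
  rw [cnormsq, Finset.mul_sum, exp_sum]
  refine Finset.prod_congr rfl fun i _ => ?_
  have : 0 < √(2 * π * lam i ^ 2) := by have := hlam i; positivity
  rw [mul_inv_cancel₀ this.ne', one_mul]
  congr 1
  field_simp

theorem piN_eq_tilted {lam : ℕ → ℝ} (hlam : ∀ j, lam j ≠ 0) {s : ℝ} {Ψ : Hsp → ℝ} {N : ℕ}
    (hΨ : Measurable (PsiN s Ψ N))
    (hexp : Integrable (fun x => exp (-PsiN s Ψ N x)) (priorN lam N)) :
    piN lam s Ψ N = (priorN lam N).tilted fun x => -PsiN s Ψ N x := by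
  have hc : 0 < ∏ i : Fin N, √(2 * π * lam i ^ 2) :=
    Finset.prod_pos fun i _ => by have := hlam i; positivity
  have hdensity : volume.withDensity (fun x => ENNReal.ofReal
      (exp (-(1/2) * cnormsq lam N x - PsiN s Ψ N x))) =
      ENNReal.ofReal (∏ i : Fin N, √(2 * π * lam i ^ 2)) •
        (priorN lam N).withDensity fun x => ENNReal.ofReal (exp (-PsiN s Ψ N x)) := by
    rw [← withDensity_smul_measure, ← withDensity_exp_neg_half_cnormsq hlam,
      ← withDensity_mul _ (by unfold cnormsq; fun_prop) (by fun_prop)]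
    congr with x
    rw [Pi.mul_apply, ← ENNReal.ofReal_mul (exp_pos _).le, ← exp_add, sub_eq_add_neg]
  rw [piN, hdensity,
    Measure.inv_measure_univ_smul_smul _ (by simpa using hc) ENNReal.ofReal_ne_top,
    Measure.tilted_eq_smul_withDensity _ hexp]

lemma integrable_priorN_coord_pow (lam : ℕ → ℝ) {N : ℕ} (i : Fin N) (m : ℕ) :
    Integrable (fun x => (x i / lam i) ^ (2 * m)) (priorN lam N) := by
  simp only [priorN, div_pow]
  exact integrable_comp_eval (μ := fun j : Fin N => gaussianReal 0 (lam j ^ 2).toNNReal) (i := i)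
    (f := fun t : ℝ => t ^ (2 * m) / lam i ^ (2 * m))
    ((integrable_pow_two_mul_gaussianReal _ _ m).div_const _)

lemma integral_priorN_coord_pow {lam : ℕ → ℝ} (hlam : ∀ j, lam j ≠ 0) {N : ℕ} (i : Fin N)
    (m : ℕ) :
    ∫ x, (x i / lam i) ^ (2 * m) ∂priorN lam N = ∫ z, z ^ (2 * m) ∂gaussianReal 0 1 := by
  rw [priorN, integral_comp_eval (μ := fun j : Fin N => gaussianReal 0 (lam j ^ 2).toNNReal)
      (i := i) (f := fun t : ℝ => (t / lam i) ^ (2 * m)) (by fun_prop),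
    ← integral_map (φ := (· / lam i)) (f := fun z : ℝ => z ^ (2 * m)) (by fun_prop) (by fun_prop),
    gaussianReal_map_div_const]
  congr 2
  · simp
  · ext
    simp [max_eq_left (sq_nonneg (lam i)), hlam i]

lemma integrable_sum_mul_coord_pow (lam : ℕ → ℝ) (s : ℝ) (N m : ℕ) : Integrable
    (fun x => ∑ i : Fin N, wt (2 * s) i * lam i ^ 2 * (x i / lam i) ^ (2 * m)) (priorN lam N) :=
  integrable_finsetSum _ fun i _ => (integrable_priorN_coord_pow lam i m).const_mul _

section PriorMoments

variable {lam : ℕ → ℝ} (hlam : ∀ j, lam j ≠ 0) (s : ℝ) (N : ℕ)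
include hlam

lemma xnormSq_eq_sum_mul_sq_div (x : Fin N → ℝ) :
    xnormSq s N x = ∑ i : Fin N, wt (2 * s) i * lam i ^ 2 * (x i / lam i) ^ 2 := by
  refine Finset.sum_congr rfl fun i _ => ?_
  have := hlam i
  field_simp

lemma xnormSq_pow_le {m : ℕ} (hm : m ≠ 0) (x : Fin N → ℝ) :
    xnormSq s N x ^ m ≤ (∑ i : Fin N, wt (2 * s) i * lam i ^ 2) ^ (m - 1) *
      ∑ i : Fin N, wt (2 * s) i * lam i ^ 2 * (x i / lam i) ^ (2 * m) := by
  simp only [xnormSq_eq_sum_mul_sq_div hlam, pow_mul]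
  exact pow_sum_mul_le _ (fun i => mul_nonneg (wt_nonneg _ _) (sq_nonneg _))
    (fun i => sq_nonneg _) hm

lemma integrable_xnormSq_pow (m : ℕ) :
    Integrable (fun x => xnormSq s N x ^ m) (priorN lam N) := by
  rcases eq_or_ne m 0 with rfl | hm
  · simp
  refine ((integrable_sum_mul_coord_pow lam s N m).const_mul
    ((∑ i : Fin N, wt (2 * s) i * lam i ^ 2) ^ (m - 1))).mono'
    ((continuous_xnormSq s N).pow m).aestronglyMeasurable (ae_of_all _ fun x => ?_)
  rw [norm_of_nonneg (pow_nonneg (xnormSq_nonneg s N x) m)]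
  exact xnormSq_pow_le hlam s N hm x

lemma integral_xnormSq_pow_le (m : ℕ) :
    ∫ x, xnormSq s N x ^ m ∂priorN lam N ≤
      (∑ i : Fin N, wt (2 * s) i * lam i ^ 2) ^ m * ∫ z, z ^ (2 * m) ∂gaussianReal 0 1 := by
  rcases eq_or_ne m 0 with rfl | hm
  · simp
  calc ∫ x, xnormSq s N x ^ m ∂priorN lam N
      ≤ ∫ x, (∑ i : Fin N, wt (2 * s) i * lam i ^ 2) ^ (m - 1) *
          ∑ i : Fin N, wt (2 * s) i * lam i ^ 2 * (x i / lam i) ^ (2 * m) ∂priorN lam N :=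
        integral_mono (integrable_xnormSq_pow hlam s N m)
          ((integrable_sum_mul_coord_pow lam s N m).const_mul _) (xnormSq_pow_le hlam s N hm)
    _ = (∑ i : Fin N, wt (2 * s) i * lam i ^ 2) ^ m * ∫ z, z ^ (2 * m) ∂gaussianReal 0 1 := by
        simp only [integral_const_mul, integral_finsetSum _ fun i _ =>
            (integrable_priorN_coord_pow lam i m).const_mul _,
          integral_priorN_coord_pow hlam, ← Finset.sum_mul]
        rw [← mul_assoc, ← pow_succ, Nat.sub_add_cancel (Nat.one_le_iff_ne_zero.2 hm)]

end PriorMoments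

lemma sum_wt_mul_sq_le {lam : ℕ → ℝ} {κ cplus s : ℝ} (hlam0 : ∀ j, 0 ≤ lam j)
    (hlam : ∀ j, lam j ≤ cplus * wt (-κ) j) (hsκ : 2 * s - 2 * κ < -1) (N : ℕ) :
    ∑ i : Fin N, wt (2 * s) i * lam i ^ 2 ≤ cplus ^ 2 * ∑' j, wt (2 * s - 2 * κ) j := by
  have hterm : ∀ j, wt (2 * s) j * lam j ^ 2 ≤ cplus ^ 2 * wt (2 * s - 2 * κ) j := fun j =>
    calc wt (2 * s) j * lam j ^ 2 ≤ wt (2 * s) j * (cplus * wt (-κ) j) ^ 2 :=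
          mul_le_mul_of_nonneg_left (pow_le_pow_left₀ (hlam0 j) (hlam j) 2) (wt_nonneg _ _)
      _ = cplus ^ 2 * wt (2 * s - 2 * κ) j := by
          rw [mul_pow, wt_sq, mul_left_comm, wt_mul]
          ring_nf
  rw [Fin.sum_univ_eq_sum_range (fun j => wt (2 * s) j * lam j ^ 2)]
  calc ∑ j ∈ Finset.range N, wt (2 * s) j * lam j ^ 2
      ≤ ∑ j ∈ Finset.range N, cplus ^ 2 * wt (2 * s - 2 * κ) j :=
        Finset.sum_le_sum fun j _ => hterm j
    _ ≤ cplus ^ 2 * ∑' j, wt (2 * s - 2 * κ) j := by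
        rw [← Finset.mul_sum]
        exact mul_le_mul_of_nonneg_left
          ((summable_wt hsκ).sum_le_tsum _ fun j _ => wt_nonneg _ _) (sq_nonneg _)

section PriorBounds

variable {lam : ℕ → ℝ} (hlam : ∀ j, lam j ≠ 0) {s : ℝ} {N : ℕ} {S : ℝ}
  (hS : ∑ i : Fin N, wt (2 * s) i * lam i ^ 2 ≤ S)
include hlam

lemma integrable_xnormSq_rpow {q : ℝ} (hq : 0 ≤ q) {m : ℕ} (hqm : q ≤ m) :
    Integrable (fun x => xnormSq s N x ^ q) (priorN lam N) :=
  ((integrable_const 1).add (integrable_xnormSq_pow hlam s N m)).mono'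
    ((continuous_xnormSq s N).rpow_const fun _ => Or.inr hq).aestronglyMeasurable
    (ae_of_all _ fun x => by
      rw [norm_of_nonneg (rpow_nonneg (xnormSq_nonneg s N x) q)]
      exact rpow_le_one_add_pow (xnormSq_nonneg s N x) hq hqm)

include hS

lemma integral_xnormSq_rpow_le {q : ℝ} (hq : 0 ≤ q) {m : ℕ} (hqm : q ≤ m) :
    ∫ x, xnormSq s N x ^ q ∂priorN lam N ≤ 1 + S ^ m * ∫ z, z ^ (2 * m) ∂gaussianReal 0 1 := by
  have hA : 0 ≤ ∑ i : Fin N, wt (2 * s) i * lam i ^ 2 :=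
    Finset.sum_nonneg fun _ _ => mul_nonneg (wt_nonneg _ _) (sq_nonneg _)
  have hg : 0 ≤ ∫ z, z ^ (2 * m) ∂gaussianReal 0 1 :=
    integral_nonneg fun z => (even_two_mul m).pow_nonneg z
  calc ∫ x, xnormSq s N x ^ q ∂priorN lam N
      ≤ ∫ x, 1 + xnormSq s N x ^ m ∂priorN lam N :=
        integral_mono (integrable_xnormSq_rpow hlam hq hqm)
          ((integrable_const 1).add (integrable_xnormSq_pow hlam s N m))
          fun x => rpow_le_one_add_pow (xnormSq_nonneg s N x) hq hqm
    _ ≤ 1 + S ^ m * ∫ z, z ^ (2 * m) ∂gaussianReal 0 1 := by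
        rw [integral_add (integrable_const 1) (integrable_xnormSq_pow hlam s N m)]
        simp only [integral_const, probReal_univ, smul_eq_mul, one_mul, add_le_add_iff_left]
        exact (integral_xnormSq_pow_le hlam s N m).trans
          (mul_le_mul_of_nonneg_right (pow_le_pow_left₀ hA hS m) hg)

lemma half_le_priorN_xnormSq_le :
    1 / 2 ≤ (priorN lam N).real
      {x | xnormSq s N x ≤ 2 * S * ∫ z, z ^ 2 ∂gaussianReal 0 1 + 1} := by
  have hmean := integral_xnormSq_pow_le hlam s N 1
  simp only [pow_one, mul_one] at hmean
  have hA : 0 ≤ ∑ i : Fin N, wt (2 * s) i * lam i ^ 2 :=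
    Finset.sum_nonneg fun _ _ => mul_nonneg (wt_nonneg _ _) (sq_nonneg _)
  have hg : 0 ≤ ∫ z, z ^ 2 ∂gaussianReal 0 1 := integral_nonneg fun z => sq_nonneg z
  refine half_le_measureReal_le_of_two_mul_integral_le (continuous_xnormSq s N).measurable
    (xnormSq_nonneg s N) (by simpa using integrable_xnormSq_pow hlam s N 1)
    (by nlinarith [mul_nonneg (hA.trans hS) hg]) ?_
  nlinarith [mul_le_mul_of_nonneg_right hS hg]

end PriorBounds

theorem integral_piN_xnormSq_rpow_le {lam : ℕ → ℝ} (hlam : ∀ j, lam j ≠ 0) {s : ℝ}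
    {Ψ : Hsp → ℝ} {M₁ M₂ : ℝ} (hΨ : Continuous Ψ) (hΨlb : ∀ x, M₁ ≤ Ψ x)
    (hΨub : ∀ x, Ψ x ≤ M₂ * (1 + ‖x‖ ^ 2)) {N : ℕ} {S : ℝ}
    (hS : ∑ i : Fin N, wt (2 * s) i * lam i ^ 2 ≤ S) {q : ℝ} (hq : 0 ≤ q) {m : ℕ} (hqm : q ≤ m) :
    ∫ x, xnormSq s N x ^ q ∂piN lam s Ψ N ≤
      2 * exp (|M₂| * (1 + (2 * S * ∫ z, z ^ 2 ∂gaussianReal 0 1 + 1)) - M₁) *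
        (1 + S ^ m * ∫ z, z ^ (2 * m) ∂gaussianReal 0 1) := by
  set T := 2 * S * ∫ z, z ^ 2 ∂gaussianReal 0 1 + 1
  have hΦ : Measurable (PsiN s Ψ N) := (hΨ.comp (continuous_ofX s N)).measurable
  have hΦlb : ∀ x, M₁ ≤ PsiN s Ψ N x := fun x => hΨlb _
  have hΦA : ∀ x ∈ {x | xnormSq s N x ≤ T}, PsiN s Ψ N x ≤ |M₂| * (1 + T) := fun x hx => by
    have hub := norm_ofX_sq s N x ▸ hΨub (ofX s N x)
    have hx : xnormSq s N x ≤ T := hx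
    show Ψ (ofX s N x) ≤ _
    nlinarith [mul_nonneg (sub_nonneg.2 (le_abs_self M₂)) (by linarith [xnormSq_nonneg s N x] :
      (0 : ℝ) ≤ 1 + xnormSq s N x), mul_nonneg (abs_nonneg M₂) (sub_nonneg.2 hx)]
  have hhalf := half_le_priorN_xnormSq_le hlam hS
  rw [piN_eq_tilted hlam hΦ (integrable_exp_neg_of_le hΦ hΦlb)]
  calc ∫ x, xnormSq s N x ^ q ∂((priorN lam N).tilted fun x => -PsiN s Ψ N x)
      ≤ exp (|M₂| * (1 + T) - M₁) / (priorN lam N).real {x | xnormSq s N x ≤ T} *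
          ∫ x, xnormSq s N x ^ q ∂priorN lam N :=
        integral_tilted_neg_le hΦ hΦlb (measurableSet_le (continuous_xnormSq s N).measurable
          measurable_const) (by linarith) hΦA (integrable_xnormSq_rpow hlam hq hqm)
          fun x => rpow_nonneg (xnormSq_nonneg s N x) q
    _ ≤ exp (|M₂| * (1 + T) - M₁) / (1 / 2) *
          (1 + S ^ m * ∫ z, z ^ (2 * m) ∂gaussianReal 0 1) := by
        gcongr
        · exact integral_nonneg fun x => rpow_nonneg (xnormSq_nonneg s N x) q
        · exact integral_xnormSq_rpow_le hlam hS hq hqm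
    _ = _ := by ring

theorem statement_9_general (lam : ℕ → ℝ) (κ cminus cplus s : ℝ) (Ψ : Hsp → ℝ)
    (M₁ M₂ : ℝ)
    (hlampos : ∀ j : ℕ, 0 < lam j)
    (hlam : ∀ j : ℕ, cminus * wt (-κ) j ≤ lam j ∧ lam j ≤ cplus * wt (-κ) j)
    (hsκ : s < κ - 1/2)
    (hΨdiff : Differentiable ℝ Ψ)
    (hΨlb : ∀ x : Hsp, M₁ ≤ Ψ x) (hΨub : ∀ x : Hsp, Ψ x ≤ M₂ * (1 + ‖x‖ ^ 2)):
    ∀ p : ℝ, 1 ≤ p → ∃ B : ℝ, ∀ N : ℕ, 1 ≤ N →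
      (∫ x, xnorm s N x ^ p ∂(piN lam s Ψ N)) ≤ B := by
  intro p hp
  set S := cplus ^ 2 * ∑' j, wt (2 * s - 2 * κ) j
  refine ⟨2 * exp (|M₂| * (1 + (2 * S * ∫ z, z ^ 2 ∂gaussianReal 0 1 + 1)) - M₁) *
    (1 + S ^ ⌈p / 2⌉₊ * ∫ z, z ^ (2 * ⌈p / 2⌉₊) ∂gaussianReal 0 1), fun N _ => ?_⟩
  simp only [xnorm_rpow]
  exact integral_piN_xnormSq_rpow_le (fun j => (hlampos j).ne') hΨdiff.continuous hΨlb hΨub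
    (sum_wt_mul_sq_le (fun j => (hlampos j).le) (fun j => (hlam j).2) (by linarith) N)
    (by linarith) (Nat.le_ceil _)

theorem statement_9 (lam : ℕ → ℝ) (κ cminus cplus s : ℝ) (Ψ : Hsp → ℝ) (gradΨ : Hsp → Hsp)
    (M₁ M₂ M₃ M₄ : ℝ)
    (hκ : 1/2 < κ) (hcminus : 0 < cminus) (hcpm : cminus ≤ cplus)
    (hlampos : ∀ j : ℕ, 0 < lam j)
    (hlam : ∀ j : ℕ, cminus * wt (-κ) j ≤ lam j ∧ lam j ≤ cplus * wt (-κ) j)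
    (hs0 : 0 ≤ s) (hsκ : s < κ - 1/2)
    (hΨdiff : Differentiable ℝ Ψ) (hΨdiff2 : Differentiable ℝ (fderiv ℝ Ψ))
    (hgradrep : ∀ x h : Hsp, fderiv ℝ Ψ x h = ∑' j, seqr (-s) (gradΨ x) j * seqr s h j)
    (hΨlb : ∀ x : Hsp, M₁ ≤ Ψ x) (hΨub : ∀ x : Hsp, Ψ x ≤ M₂ * (1 + ‖x‖ ^ 2))
    (hgradb : ∀ x : Hsp, ‖gradΨ x‖ ≤ M₃ * (1 + ‖x‖))
    (hhessb : ∀ x : Hsp, ‖fderiv ℝ (fderiv ℝ Ψ) x‖ ≤ M₄):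
    ∀ p : ℝ, 1 ≤ p → ∃ B : ℝ, ∀ N : ℕ, 1 ≤ N →
      (∫ x, xnorm s N x ^ p ∂(piN lam s Ψ N)) ≤ B :=
  statement_9_general lam κ cminus cplus s Ψ M₁ M₂ hlampos hlam hsκ hΨdiff hΨlb hΨub

end
end
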